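/- arXiv:2207.02116 — 7 statements merged into one kernel-verified Lean document; each statement's English description precedes it below -/
import Mathlib

section
/- The matrix C is a two-sided inverse of A: C * A = 1 and A * C = 1; in particular A is invertible with A⁻¹ = C. -/
open Matrix Finset

/-- The tridiagonal matrix `C` is a two-sided inverse of the layer-coupling
matrix `A` defined by `A i j = ρ (min i j)`; in particular `A` is invertible
with `A⁻¹ = C`. -/
theorem layer_coupling_inverse
    (N : ℕ) (hN : 2 ≤ N) (ρ : ℕ → ℝ)
    (hρ : ∀ i j, i < j → j < N → ρ i < ρ j) (hρ0 : 0 < ρ 0)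
    (A C : Matrix (Fin N) (Fin N) ℝ)
    (hA : ∀ i j : Fin N, A i j = ρ (min i.val j.val))
    (hC : ∀ i j : Fin N, C i j =
      if i.val = j.val then
        (if i.val = 0 then 1 / ρ 0 + 1 / (ρ 1 - ρ 0)
         else if i.val = N - 1 then 1 / (ρ (N - 1) - ρ (N - 2))
         else 1 / (ρ i.val - ρ (i.val - 1)) + 1 / (ρ (i.val + 1) - ρ i.val))
      else if i.val + 1 = j.val ∨ j.val + 1 = i.val then
        -(1 / (ρ (max i.val j.val) - ρ (min i.val j.val)))
      else 0) :
    C * A = 1 ∧ A * C = 1 ∧ IsUnit A ∧ A⁻¹ = C := by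
  have key : C * A = 1 := by
    ext i j
    rw [Matrix.mul_apply, Matrix.one_apply]
    by_cases hi0 : i.val = 0
    · -- first row
      have h1N : 1 < N := by omega
      set k0 : Fin N := ⟨0, by omega⟩ with hk0def
      set k1 : Fin N := ⟨1, h1N⟩ with hk1def
      have hv0 : (k0 : ℕ) = 0 := rfl
      have hv1 : (k1 : ℕ) = 1 := rfl
      have hne : k0 ≠ k1 := by simp [Fin.ext_iff, hv0, hv1]
      have hzero : ∀ k ∈ Finset.univ, k ∉ ({k0, k1} : Finset (Fin N)) →
          C i k * A k j = 0 := by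
        intro k _ hk
        simp only [Finset.mem_insert, Finset.mem_singleton, not_or] at hk
        have hw0 : k.val ≠ 0 := fun h => hk.1 (Fin.ext (by rw [h, hv0]))
        have hw1 : k.val ≠ 1 := fun h => hk.2 (Fin.ext (by rw [h, hv1]))
        rw [hC, if_neg (by omega), if_neg (by omega), zero_mul]
      rw [← Finset.sum_subset (Finset.subset_univ {k0, k1}) hzero,
        Finset.sum_pair hne]
      have hd0 : ρ 1 - ρ 0 ≠ 0 := sub_ne_zero.mpr (hρ 0 1 (by omega) h1N).ne'
      have hC0 : C i k0 = 1 / ρ 0 + 1 / (ρ 1 - ρ 0) := by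
        rw [hC, hv0, if_pos (by omega), if_pos hi0]
      have hC1 : C i k1 = -(1 / (ρ 1 - ρ 0)) := by
        rw [hC, hv1, if_neg (by omega), if_pos (by omega), hi0]
        norm_num
      have hA0 : A k0 j = ρ 0 := by rw [hA, hv0]; norm_num
      rw [hC0, hC1, hA0, hA, hv1]
      rcases eq_or_ne i j with hij | hij
      · rw [if_pos hij]
        have hjv : j.val = 0 := by rw [← hij]; exact hi0
        rw [hjv, Nat.min_eq_right (by omega)]
        field_simp
        ring
      · rw [if_neg hij]
        have hjv : 1 ≤ j.val := by
          rcases Nat.eq_zero_or_pos j.val with h | h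
          · exact absurd (Fin.ext (by omega)) hij
          · omega
        rw [Nat.min_eq_left (by omega)]
        field_simp
        ring
    · by_cases hiN : i.val = N - 1
      · -- last row
        set ka : Fin N := ⟨N - 2, by omega⟩ with hkadef
        set kb : Fin N := ⟨N - 1, by omega⟩ with hkbdef
        have hva : (ka : ℕ) = N - 2 := rfl
        have hvb : (kb : ℕ) = N - 1 := rfl
        have hne : ka ≠ kb := by rw [Ne, Fin.ext_iff, hva, hvb]; omega
        have hzero : ∀ k ∈ Finset.univ, k ∉ ({ka, kb} : Finset (Fin N)) →
            C i k * A k j = 0 := by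
          intro k _ hk
          simp only [Finset.mem_insert, Finset.mem_singleton, not_or] at hk
          have hwa : k.val ≠ N - 2 := fun h => hk.1 (Fin.ext (by rw [h, hva]))
          have hwb : k.val ≠ N - 1 := fun h => hk.2 (Fin.ext (by rw [h, hvb]))
          have hkN := k.isLt
          rw [hC, if_neg (by omega), if_neg (by omega), zero_mul]
        rw [← Finset.sum_subset (Finset.subset_univ {ka, kb}) hzero,
          Finset.sum_pair hne]
        have hd : ρ (N - 1) - ρ (N - 2) ≠ 0 :=
          sub_ne_zero.mpr (hρ (N - 2) (N - 1) (by omega) (by omega)).ne'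
        have hCa : C i ka = -(1 / (ρ (N - 1) - ρ (N - 2))) := by
          rw [hC, hva, if_neg (by omega), if_pos (by omega), hiN,
            Nat.max_eq_left (by omega), Nat.min_eq_right (by omega)]
        have hCb : C i kb = 1 / (ρ (N - 1) - ρ (N - 2)) := by
          rw [hC, hvb, if_pos (by omega), if_neg (by omega), if_pos hiN]
        rw [hCa, hCb, hA, hA, hva, hvb]
        rcases eq_or_ne i j with hij | hij
        · rw [if_pos hij]
          have hjv : j.val = N - 1 := by rw [← hij]; exact hiN
          rw [hjv, Nat.min_eq_left (by omega), Nat.min_eq_left (by omega)]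
          field_simp
          ring
        · rw [if_neg hij]
          have hj1 := j.isLt
          have hjne : j.val ≠ N - 1 := by
            intro h
            exact hij (Fin.ext (by omega))
          rw [Nat.min_eq_right (by omega), Nat.min_eq_right (by omega)]
          ring
      · -- middle row
        have hn1 : 1 ≤ i.val := by omega
        have hnN : i.val < N - 1 := by have := i.isLt; omega
        set ka : Fin N := ⟨i.val - 1, by omega⟩ with hkadef
        set kb : Fin N := ⟨i.val, i.isLt⟩ with hkbdef
        set kc : Fin N := ⟨i.val + 1, by omega⟩ with hkcdef
        have hva : (ka : ℕ) = i.val - 1 := rfl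
        have hvb : (kb : ℕ) = i.val := rfl
        have hvc : (kc : ℕ) = i.val + 1 := rfl
        have hneab : ka ≠ kb := by rw [Ne, Fin.ext_iff, hva, hvb]; omega
        have hnebc : kb ≠ kc := by simp [Fin.ext_iff, hvb, hvc]
        have hneac : ka ≠ kc := by rw [Ne, Fin.ext_iff, hva, hvc]; omega
        have hnotmem : ka ∉ ({kb, kc} : Finset (Fin N)) := by
          simp [hneab, hneac]
        have hzero : ∀ k ∈ Finset.univ, k ∉ ({ka, kb, kc} : Finset (Fin N)) →
            C i k * A k j = 0 := by
          intro k _ hk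
          simp only [Finset.mem_insert, Finset.mem_singleton, not_or] at hk
          have hwa : k.val ≠ i.val - 1 := fun h => hk.1 (Fin.ext (by rw [h, hva]))
          have hwb : k.val ≠ i.val := fun h => hk.2.1 (Fin.ext (by rw [h, hvb]))
          have hwc : k.val ≠ i.val + 1 := fun h => hk.2.2 (Fin.ext (by rw [h, hvc]))
          rw [hC, if_neg (by omega), if_neg (by omega), zero_mul]
        rw [← Finset.sum_subset (Finset.subset_univ {ka, kb, kc}) hzero,
          Finset.sum_insert hnotmem, Finset.sum_pair hnebc]
        have hd1 : ρ i.val - ρ (i.val - 1) ≠ 0 :=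
          sub_ne_zero.mpr (hρ (i.val - 1) i.val (by omega) i.isLt).ne'
        have hd2 : ρ (i.val + 1) - ρ i.val ≠ 0 :=
          sub_ne_zero.mpr (hρ i.val (i.val + 1) (by omega) (by omega)).ne'
        have hCa : C i ka = -(1 / (ρ i.val - ρ (i.val - 1))) := by
          rw [hC, hva, if_neg (by omega), if_pos (by omega),
            Nat.max_eq_left (by omega), Nat.min_eq_right (by omega)]
        have hCb : C i kb = 1 / (ρ i.val - ρ (i.val - 1)) + 1 / (ρ (i.val + 1) - ρ i.val) := by
          rw [hC, hvb, if_pos rfl, if_neg (by omega), if_neg (by omega)]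
        have hCc : C i kc = -(1 / (ρ (i.val + 1) - ρ i.val)) := by
          rw [hC, hvc, if_neg (by omega), if_pos (by omega),
            Nat.max_eq_right (by omega), Nat.min_eq_left (by omega)]
        rw [hCa, hCb, hCc, hA, hA, hA, hva, hvb, hvc]
        rcases lt_trichotomy j.val i.val with hjv | hjv | hjv
        · rw [if_neg (fun h => by rw [h] at hjv; exact lt_irrefl _ hjv)]
          rw [Nat.min_eq_right (by omega), Nat.min_eq_right (by omega),
            Nat.min_eq_right (by omega)]
          ring
        · rw [if_pos (Fin.ext hjv.symm), hjv,
            Nat.min_eq_left (by omega), Nat.min_self, Nat.min_eq_right (by omega)]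
          field_simp
          ring
        · rw [if_neg (fun h => by rw [h] at hjv; exact lt_irrefl _ hjv)]
          rw [Nat.min_eq_left (by omega), Nat.min_eq_left (by omega),
            Nat.min_eq_left (by omega)]
          field_simp
          ring
  have key2 : A * C = 1 := mul_eq_one_comm.mp key
  exact ⟨key, key2, ⟨⟨A, C, key2, key⟩, rfl⟩, Matrix.inv_eq_right_inv key2⟩
end

section
/- The matrix A is symmetric positive definite: A is Hermitian and for every nonzero x ∈ ℝ^N one has xᵀ A x > 0. -/
open Matrix Finset

/-- The layer-coupling matrix `A` with `A i j = ρ (min i j)` for strictly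
increasing positive densities is symmetric positive definite. -/
theorem layer_coupling_posdef
    (N : ℕ) (hN : 2 ≤ N) (ρ : ℕ → ℝ)
    (hρ : ∀ i j, i < j → j < N → ρ i < ρ j) (hρ0 : 0 < ρ 0)
    (A : Matrix (Fin N) (Fin N) ℝ)
    (hA : ∀ i j : Fin N, A i j = ρ (min i.val j.val)) :
    A.IsHermitian ∧ ∀ x : Fin N → ℝ, x ≠ 0 → 0 < x ⬝ᵥ (A *ᵥ x) := by
  constructor
  · ext i j
    simp [Matrix.conjTranspose_apply, hA, min_comm]
  intro x hx
  set d : ℕ → ℝ := fun k => if k = 0 then ρ 0 else ρ k - ρ (k - 1) with hd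
  have hdpos : ∀ k, k < N → 0 < d k := by
    intro k hk
    rcases Nat.eq_zero_or_pos k with h0 | h0
    · simpa [hd, h0] using hρ0
    · have h1 : ρ (k - 1) < ρ k := hρ (k - 1) k (Nat.sub_lt h0 one_pos) hk
      have hk0 : k ≠ 0 := h0.ne'
      simp [hd, hk0, sub_pos.mpr h1]
  have hsum : ∀ m, m < N → ρ m = ∑ k ∈ range (m + 1), d k := by
    intro m hm
    induction m with
    | zero => simp [hd]
    | succ n ih =>
      rw [Finset.sum_range_succ, ← ih (lt_trans (Nat.lt_succ_self n) hm)]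
      simp [hd]
  -- key identity for entries
  have hAkey : ∀ i j : Fin N, A i j
      = ∑ k ∈ range N, (if k ≤ i.val ∧ k ≤ j.val then d k else 0) := by
    intro i j
    have hmin : min i.val j.val < N := lt_of_le_of_lt (min_le_left _ _) i.isLt
    rw [hA i j, hsum _ hmin]
    calc ∑ k ∈ range (min i.val j.val + 1), d k
        = ∑ k ∈ range (min i.val j.val + 1),
            (if k ≤ i.val ∧ k ≤ j.val then d k else 0) := by
          apply Finset.sum_congr rfl
          intro k hk
          simp only [Finset.mem_range] at hk
          have : k ≤ i.val ∧ k ≤ j.val := by omega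
          simp [this]
      _ = ∑ k ∈ range N, (if k ≤ i.val ∧ k ≤ j.val then d k else 0) := by
          apply Finset.sum_subset (Finset.range_subset_range.mpr hmin)
          intro k _ hk
          simp only [Finset.mem_range, not_lt] at hk
          have : ¬ (k ≤ i.val ∧ k ≤ j.val) := by omega
          simp [this]
  -- partial sums
  set T : ℕ → ℝ := fun k => ∑ i : Fin N, (if k ≤ i.val then x i else 0) with hT
  have hterm : ∀ (k : ℕ) (i j : Fin N),
      x i * ((if k ≤ i.val ∧ k ≤ j.val then d k else 0) * x j)
        = d k * ((if k ≤ i.val then x i else 0) * (if k ≤ j.val then x j else 0)) := by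
    intro k i j
    by_cases h1 : k ≤ i.val <;> by_cases h2 : k ≤ j.val <;>
      simp only [h1, h2, if_true, if_false, true_and, false_and, and_true, and_false] <;>
      ring
  have hquad : x ⬝ᵥ (A *ᵥ x) = ∑ k ∈ range N, d k * (T k) ^ 2 := by
    calc x ⬝ᵥ (A *ᵥ x) = ∑ i : Fin N, ∑ j : Fin N, x i * (A i j * x j) := by
          simp [dotProduct, Matrix.mulVec, Finset.mul_sum]
      _ = ∑ i : Fin N, ∑ j : Fin N, ∑ k ∈ range N,
            d k * ((if k ≤ i.val then x i else 0) * (if k ≤ j.val then x j else 0)) := by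
          simp_rw [hAkey, Finset.sum_mul, Finset.mul_sum, hterm]
      _ = ∑ k ∈ range N, ∑ i : Fin N, ∑ j : Fin N,
            d k * ((if k ≤ i.val then x i else 0) * (if k ≤ j.val then x j else 0)) := by
          rw [Finset.sum_congr rfl fun i _ => Finset.sum_comm]
          exact Finset.sum_comm
      _ = ∑ k ∈ range N, d k * (T k) ^ 2 := by
          apply Finset.sum_congr rfl
          intro k _
          simp_rw [← Finset.mul_sum]
          rw [← Finset.sum_mul]
          simp only [hT]
          ring
  have hThigh : ∀ k, N ≤ k → T k = 0 := by
    intro k hk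
    apply Finset.sum_eq_zero
    intro i _
    rw [if_neg]
    omega
  have hdiff : ∀ (k : ℕ) (hk : k < N), x ⟨k, hk⟩ = T k - T (k + 1) := by
    intro k hk
    rw [hT]
    simp only
    rw [← Finset.sum_sub_distrib]
    rw [show x ⟨k, hk⟩ = ∑ i : Fin N, (if i = ⟨k, hk⟩ then x i else 0) by simp]
    apply Finset.sum_congr rfl
    intro i _
    rcases eq_or_ne i (⟨k, hk⟩ : Fin N) with h | h
    · subst h; simp
    · have : i.val ≠ k := fun hc => h (Fin.ext hc)
      rw [if_neg h]
      split_ifs <;> first | omega | ring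
  have hex : ∃ k ∈ range N, T k ≠ 0 := by
    by_contra h
    push_neg at h
    apply hx
    have hT0 : ∀ k, T k = 0 := by
      intro k
      by_cases h' : k < N
      · exact h k (Finset.mem_range.mpr h')
      · exact hThigh k (le_of_not_gt h')
    funext i
    have := hdiff i.val i.isLt
    simpa [hT0] using this
  rw [hquad]
  obtain ⟨k0, hk0, hk0ne⟩ := hex
  apply Finset.sum_pos'
  · intro k hk
    exact mul_nonneg (hdpos k (Finset.mem_range.mp hk)).le (sq_nonneg _)
  · exact ⟨k0, hk0, mul_pos (hdpos k0 (Finset.mem_range.mp hk0))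
      (pow_two_pos_of_ne_zero hk0ne)⟩
end

section
/- Assume additionally that ρ (N−1) ≤ 2 · ρ 0. Then every eigenvalue λ of the real symmetric matrix A satisfies λ ≥ δρ⋆ / 4; in particular the smallest eigenvalue λ_N of A is at least δρ⋆ / 4. -/
open Matrix Finset

/-!
With `c = increments ρ`, so that `ρ m = ∑_{k ≤ m} c k`, we have
`A = ∑_k c k • 𝟙_{≥ k} 𝟙_{≥ k}ᵀ`, so the quadratic form of `A` at `x` is `∑_k c k * S k ^ 2`
with tail sums `S k = ∑_{i ≥ k} x i`. Every `c k` is at least `δρ⋆`: for `k ≥ 1` by definition,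
and for `k = 0` because `ρ 0 ≥ ρ (N - 1) - ρ 0 ≥ ρ 1 - ρ 0`. Finally `x k = S k - S (k + 1)` and
`S N = 0` give `‖x‖² ≤ 4 ∑_k S k ^ 2`, so the Rayleigh quotient of `A` is at least `δρ⋆ / 4`.
-/

def increments {G : Type*} [AddCommGroup G] (ρ : ℕ → G) : ℕ → G
  | 0 => ρ 0
  | k + 1 => ρ (k + 1) - ρ k

theorem sum_range_succ_increments {G : Type*} [AddCommGroup G] (ρ : ℕ → G) (m : ℕ) :
    ∑ k ∈ range (m + 1), increments ρ k = ρ m := by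
  induction m with
  | zero => simp [increments]
  | succ m ih => rw [sum_range_succ, ih, increments, add_sub_cancel]

theorem sum_range_ite_le_eq_sum_Ico {M : Type*} [AddCommMonoid M] (y : ℕ → M) (k n : ℕ) :
    ∑ i ∈ range n, (if k ≤ i then y i else 0) = ∑ i ∈ Ico k n, y i := by
  rw [← sum_filter, range_eq_Ico, Ico_filter_le, max_eq_right (Nat.zero_le k)]

theorem sum_sum_min_mul_mul_eq_sum_increments_mul_sq {R : Type*} [CommRing R]
    (ρ y : ℕ → R) (n : ℕ) :
    ∑ i ∈ range n, ∑ j ∈ range n, ρ (min i j) * y i * y j =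
      ∑ k ∈ range n, increments ρ k * (∑ i ∈ Ico k n, y i) ^ 2 := by
  have hmin : ∀ i ∈ range n, ∀ j ∈ range n,
      ρ (min i j) = ∑ k ∈ range n, if k ≤ i ∧ k ≤ j then increments ρ k else 0 := by
    intro i hi j hj
    rw [← sum_filter, ← sum_range_succ_increments ρ (min i j)]
    congr 1
    ext k
    simp only [mem_filter, mem_range] at hi hj ⊢
    omega
  calc ∑ i ∈ range n, ∑ j ∈ range n, ρ (min i j) * y i * y j
      = ∑ i ∈ range n, ∑ j ∈ range n, ∑ k ∈ range n,
          increments ρ k * ((if k ≤ i then y i else 0) * (if k ≤ j then y j else 0)) := by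
        refine sum_congr rfl fun i hi => sum_congr rfl fun j hj => ?_
        rw [hmin i hi j hj, sum_mul, sum_mul]
        refine sum_congr rfl fun k _ => ?_
        split_ifs <;> simp_all; ring
    _ = ∑ k ∈ range n, increments ρ k *
          ((∑ i ∈ range n, if k ≤ i then y i else 0) * ∑ j ∈ range n, if k ≤ j then y j else 0) := by
        rw [sum_congr rfl fun i _ => sum_comm, sum_comm]
        simp only [sum_mul_sum]
        simp only [mul_sum]
    _ = ∑ k ∈ range n, increments ρ k * (∑ i ∈ Ico k n, y i) ^ 2 := by
        simp only [sum_range_ite_le_eq_sum_Ico, sq]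

theorem sum_range_sq_sub_le_four_mul_sum_sq (S : ℕ → ℝ) {n : ℕ} (hS : S n = 0) :
    ∑ k ∈ range n, (S k - S (k + 1)) ^ 2 ≤ 4 * ∑ k ∈ range n, S k ^ 2 := by
  have hshift : ∑ k ∈ range n, S (k + 1) ^ 2 + S 0 ^ 2 = ∑ k ∈ range n, S k ^ 2 := by
    rw [← sum_range_succ' (fun k => S k ^ 2), sum_range_succ, hS]
    ring
  calc ∑ k ∈ range n, (S k - S (k + 1)) ^ 2
      ≤ ∑ k ∈ range n, (2 * S k ^ 2 + 2 * S (k + 1) ^ 2) :=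
        sum_le_sum fun k _ => by nlinarith [sq_nonneg (S k + S (k + 1))]
    _ = 2 * ∑ k ∈ range n, S k ^ 2 + 2 * ∑ k ∈ range n, S (k + 1) ^ 2 := by
        rw [sum_add_distrib, mul_sum, mul_sum]
    _ ≤ 4 * ∑ k ∈ range n, S k ^ 2 := by nlinarith [sq_nonneg (S 0)]

theorem sum_range_sq_le_four_mul_sum_sq_sum_Ico (y : ℕ → ℝ) (n : ℕ) :
    ∑ i ∈ range n, y i ^ 2 ≤ 4 * ∑ k ∈ range n, (∑ i ∈ Ico k n, y i) ^ 2 := by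
  have hy : ∀ k ∈ range n, y k = ∑ i ∈ Ico k n, y i - ∑ i ∈ Ico (k + 1) n, y i := fun k hk => by
    rw [sum_eq_sum_Ico_succ_bot (mem_range.1 hk), add_sub_cancel_right]
  rw [sum_congr rfl fun k hk => congrArg (· ^ 2) (hy k hk)]
  exact sum_range_sq_sub_le_four_mul_sum_sq (fun k => ∑ i ∈ Ico k n, y i) (by simp)

theorem mul_sum_sq_le_sum_sum_min_mul_mul (ρ y : ℕ → ℝ) {n : ℕ} {δ : ℝ} (hδ : 0 ≤ δ)
    (hinc : ∀ k < n, δ ≤ increments ρ k) :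
    δ / 4 * ∑ i ∈ range n, y i ^ 2 ≤ ∑ i ∈ range n, ∑ j ∈ range n, ρ (min i j) * y i * y j := by
  rw [sum_sum_min_mul_mul_eq_sum_increments_mul_sq]
  calc δ / 4 * ∑ i ∈ range n, y i ^ 2
      ≤ δ / 4 * (4 * ∑ k ∈ range n, (∑ i ∈ Ico k n, y i) ^ 2) := by
        gcongr
        exact sum_range_sq_le_four_mul_sum_sq_sum_Ico y n
    _ = ∑ k ∈ range n, δ * (∑ i ∈ Ico k n, y i) ^ 2 := by
        rw [← mul_assoc, div_mul_cancel₀ _ four_ne_zero, mul_sum]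
    _ ≤ ∑ k ∈ range n, increments ρ k * (∑ i ∈ Ico k n, y i) ^ 2 :=
        sum_le_sum fun k hk => by gcongr; exact hinc k (mem_range.1 hk)

theorem dotProduct_mulVec_comp_val_of_apply_eq_min {R : Type*} [CommRing R] {N : ℕ}
    {A : Matrix (Fin N) (Fin N) R} {ρ : ℕ → R} (hA : ∀ i j : Fin N, A i j = ρ (min i.val j.val))
    (y : ℕ → R) :
    (y ∘ Fin.val) ⬝ᵥ A *ᵥ (y ∘ Fin.val) =
      ∑ i ∈ range N, ∑ j ∈ range N, ρ (min i j) * y i * y j := by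
  simp only [dotProduct, mulVec, Function.comp_apply, hA, mul_sum]
  rw [← Fin.sum_univ_eq_sum_range]
  refine sum_congr rfl fun i _ => ?_
  rw [← Fin.sum_univ_eq_sum_range (fun j => ρ (min i.val j) * y i * y j)]
  exact sum_congr rfl fun j _ => by ring

theorem dotProduct_self_comp_val {R : Type*} [CommSemiring R] {N : ℕ} (y : ℕ → R) :
    (y ∘ Fin.val) ⬝ᵥ (y ∘ Fin.val : Fin N → R) = ∑ i ∈ range N, y i ^ 2 := by
  simp only [dotProduct, Function.comp_apply, ← sq]
  exact Fin.sum_univ_eq_sum_range (fun i => y i ^ 2) N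

theorem Matrix.IsHermitian.le_eigenvalues_of_forall_le_dotProduct_mulVec {n : Type*} [Fintype n]
    [DecidableEq n] {A : Matrix n n ℝ} (hA : A.IsHermitian) {m : ℝ}
    (h : ∀ x : n → ℝ, m * (x ⬝ᵥ x) ≤ x ⬝ᵥ A *ᵥ x) (i : n) : m ≤ hA.eigenvalues i := by
  have hunit : ⇑(hA.eigenvectorBasis i) ⬝ᵥ ⇑(hA.eigenvectorBasis i) = 1 := by
    have := real_inner_self_eq_norm_sq (hA.eigenvectorBasis i)
    rw [hA.eigenvectorBasis.orthonormal.1 i, EuclideanSpace.inner_eq_star_dotProduct] at this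
    simpa using this
  simpa [hA.eigenvalues_eq, hunit] using h (hA.eigenvectorBasis i)

/-- If `ρ (N-1) ≤ 2 ρ 0`, every eigenvalue of the layer-coupling matrix `A`
is at least `δρ⋆ / 4`, where `δρ⋆` is the minimal adjacent density gap; in
particular the smallest eigenvalue is at least `δρ⋆ / 4`. -/
theorem layer_coupling_min_eigenvalue_lower_bound
    (N : ℕ) (hN : 2 ≤ N) (ρ : ℕ → ℝ)
    (hρ : ∀ i j, i < j → j < N → ρ i < ρ j)
    (hρN : ρ (N - 1) ≤ 2 * ρ 0)
    (A : Matrix (Fin N) (Fin N) ℝ)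
    (hA : ∀ i j : Fin N, A i j = ρ (min i.val j.val))
    (hHerm : A.IsHermitian)
    (δ : ℝ)
    (hδ : δ = Finset.inf' (Finset.range (N - 1))
        ⟨0, Finset.mem_range.mpr (by omega)⟩ (fun i => ρ (i + 1) - ρ i)) :
    (∀ i : Fin N, δ / 4 ≤ hHerm.eigenvalues i) ∧
    δ / 4 ≤ Finset.univ.inf' ⟨⟨0, by omega⟩, Finset.mem_univ _⟩ hHerm.eigenvalues := by
  have hgap : ∀ i, i + 1 < N → δ ≤ ρ (i + 1) - ρ i := fun i hi =>
    hδ ▸ inf'_le _ (mem_range.2 (by omega))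
  have hδ_nonneg : 0 ≤ δ := hδ ▸ (le_inf'_iff _ _).2 fun i hi =>
    sub_nonneg.2 (hρ i (i + 1) (by omega) (by rw [mem_range] at hi; omega)).le
  have hδ_le_ρ0 : δ ≤ ρ 0 := by
    have hρ1 : ρ 1 ≤ ρ (N - 1) := by
      rcases (show 1 < N - 1 ∨ 1 = N - 1 by omega) with h | h
      · exact (hρ 1 (N - 1) h (by omega)).le
      · rw [← h]
    linarith [hgap 0 (by omega)]
  have hinc : ∀ k < N, δ ≤ increments ρ k
    | 0, _ => hδ_le_ρ0
    | k + 1, hk => hgap k hk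
  have hform (x : Fin N → ℝ) : δ / 4 * (x ⬝ᵥ x) ≤ x ⬝ᵥ A *ᵥ x := by
    obtain ⟨y, rfl⟩ : ∃ y : ℕ → ℝ, x = y ∘ Fin.val :=
      ⟨fun k => if h : k < N then x ⟨k, h⟩ else 0, by ext i; simp⟩
    rw [dotProduct_self_comp_val, dotProduct_mulVec_comp_val_of_apply_eq_min hA]
    exact mul_sum_sq_le_sum_sum_min_mul_mul ρ y hδ_nonneg hinc
  have heig := hHerm.le_eigenvalues_of_forall_le_dotProduct_mulVec hform
  exact ⟨heig, le_inf' _ _ fun i _ => heig i⟩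
end

section
/- Assume N ≥ 5. Then the smallest eigenvalue λ_N of the real symmetric matrix A satisfies λ_N ≤ 3 · δρ* / 10. -/
/-!
Test the Rayleigh quotient of `A` on `x = (-1, 2, -2, 2, -1, 0, …, 0)`. Writing
`A = ∑ₖ (ρ k - ρ (k-1)) 1_{≥k} 1_{≥k}ᵀ` (with `ρ (-1) = 0`), the form `xᵀ A x` is
`∑ₖ (ρ k - ρ (k-1)) (∑_{i ≥ k} xᵢ)²`; the tail sums of `x` are `0, 1, -1, 1, -1, 0, …`, so the
form telescopes to `ρ 4 - ρ 0 ≤ 4 δρ*`, while `xᵀ x = 14`. Hence `λ_N ≤ 2 δρ* / 7 ≤ 3 δρ* / 10`.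
-/

open Matrix Finset

open scoped MatrixOrder in
theorem Matrix.IsHermitian.mul_dotProduct_self_le {n : Type*} [Fintype n] [DecidableEq n]
    {A : Matrix n n ℝ} (hA : A.IsHermitian) {c : ℝ} (hc : ∀ i, c ≤ hA.eigenvalues i)
    (x : n → ℝ) : c * (x ⬝ᵥ x) ≤ x ⬝ᵥ A *ᵥ x := by
  have hle : algebraMap ℝ (Matrix n n ℝ) c ≤ A := by
    refine algebraMap_le_of_le_spectrum (fun r hr => ?_) hA.isSelfAdjoint
    obtain ⟨i, rfl⟩ := hA.spectrum_real_eq_range_eigenvalues ▸ hr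
    exact hc i
  simpa [sub_mulVec, Algebra.algebraMap_eq_smul_one, smul_mulVec] using
    (Matrix.le_iff.mp hle).dotProduct_mulVec_nonneg x

theorem Fin.sum_univ_eq_sum_range_of_eq_zero {M : Type*} [AddCommMonoid M] {f : ℕ → M}
    {m N : ℕ} (hmN : m ≤ N) (hf : ∀ k, m ≤ k → f k = 0) :
    ∑ i : Fin N, f i = ∑ k ∈ range m, f k := by
  rw [Fin.sum_univ_eq_sum_range]
  exact (sum_subset (range_subset_range.mpr hmN) fun k _ hk => hf k (by simpa using hk)).symm

theorem Matrix.dotProduct_mulVec_eq_sum_range {R : Type*} [CommSemiring R] {m N : ℕ}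
    (hmN : m ≤ N) {g : ℕ → ℕ → R} {A : Matrix (Fin N) (Fin N) R}
    (hA : ∀ i j : Fin N, A i j = g i j) {x : ℕ → R} (hx : ∀ k, m ≤ k → x k = 0) :
    (fun i : Fin N => x i) ⬝ᵥ A *ᵥ (fun i => x i) =
      ∑ i ∈ range m, ∑ j ∈ range m, x i * g i j * x j := by
  simp only [dotProduct, mulVec, hA, mul_sum]
  rw [Fin.sum_univ_eq_sum_range_of_eq_zero (f := fun i => ∑ j : Fin N, x i * (g i j * x j)) hmN
    fun i hi => by simp [hx i hi]]
  refine sum_congr rfl fun i _ => ?_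
  rw [Fin.sum_univ_eq_sum_range_of_eq_zero (f := fun j => x i * (g i j * x j)) hmN
    fun j hj => by simp [hx j hj]]
  exact sum_congr rfl fun j _ => by ring

theorem sub_le_mul_of_forall_succ_sub_le {f : ℕ → ℝ} {δ : ℝ} {k : ℕ}
    (h : ∀ i < k, f (i + 1) - f i ≤ δ) : f k - f 0 ≤ k * δ := by
  induction k with
  | zero => simp
  | succ k ih =>
    have hlast := h k k.lt_succ_self
    have hprefix := ih fun i hi => h i (hi.trans k.lt_succ_self)
    push_cast
    linarith

noncomputable def zigzag (k : ℕ) : ℝ :=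
  if h : k < 5 then ![-1, 2, -2, 2, -1] ⟨k, h⟩ else 0

theorem zigzag_eq_zero {k : ℕ} (hk : 5 ≤ k) : zigzag k = 0 :=
  dif_neg (not_lt.mpr hk)

theorem zigzag_dotProduct_self {N : ℕ} (hN : 5 ≤ N) :
    (fun i : Fin N => zigzag i) ⬝ᵥ (fun i => zigzag i) = 14 := by
  rw [dotProduct, Fin.sum_univ_eq_sum_range_of_eq_zero (f := fun k => zigzag k * zigzag k) hN
    fun k hk => by simp [zigzag_eq_zero hk]]
  norm_num [sum_range_succ, zigzag]

theorem zigzag_dotProduct_mulVec_min {N : ℕ} (hN : 5 ≤ N) {ρ : ℕ → ℝ}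
    {A : Matrix (Fin N) (Fin N) ℝ} (hA : ∀ i j : Fin N, A i j = ρ (min i.val j.val)) :
    (fun i : Fin N => zigzag i) ⬝ᵥ A *ᵥ (fun i => zigzag i) = ρ 4 - ρ 0 := by
  rw [dotProduct_mulVec_eq_sum_range hN (g := fun i j => ρ (min i j)) hA
    fun k hk => zigzag_eq_zero hk]
  norm_num [sum_range_succ, zigzag]
  ring

/-- For `N ≥ 5`, the smallest eigenvalue of the layer-coupling matrix `A` is at
most `3 δρ* / 10`, where `δρ*` is the maximal adjacent density gap. -/
theorem layer_coupling_min_eigenvalue_upper_bound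
    (N : ℕ) (hN : 5 ≤ N) (ρ : ℕ → ℝ)
    (hρ : ∀ i j, i < j → j < N → ρ i < ρ j)
    (A : Matrix (Fin N) (Fin N) ℝ)
    (hA : ∀ i j : Fin N, A i j = ρ (min i.val j.val))
    (hHerm : A.IsHermitian)
    (δ : ℝ)
    (hδ : δ = Finset.sup' (Finset.range (N - 1))
        ⟨0, Finset.mem_range.mpr (by omega)⟩ (fun i => ρ (i + 1) - ρ i)) :
    Finset.univ.inf' ⟨⟨0, by omega⟩, Finset.mem_univ _⟩ hHerm.eigenvalues ≤
      3 * δ / 10 := by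
  have hgap : ∀ i < N - 1, ρ (i + 1) - ρ i ≤ δ := fun i hi =>
    hδ ▸ le_sup' (fun i => ρ (i + 1) - ρ i) (mem_range.mpr hi)
  have hδ_pos : 0 < δ := (sub_pos.mpr (hρ 0 1 one_pos (by omega))).trans_le (hgap 0 (by omega))
  have hrayleigh := hHerm.mul_dotProduct_self_le
    (c := univ.inf' ⟨⟨0, by omega⟩, mem_univ _⟩ hHerm.eigenvalues)
    (fun i => inf'_le hHerm.eigenvalues (mem_univ i)) (fun i : Fin N => zigzag i)
  rw [zigzag_dotProduct_self hN, zigzag_dotProduct_mulVec_min hN hA] at hrayleigh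
  have htelescope := sub_le_mul_of_forall_succ_sub_le (f := ρ) (k := 4) fun i hi =>
    hgap i (by omega)
  push_cast at htelescope
  linarith
end

section
/- There exist an N×N real matrix L and a diagonal N×N real matrix D such that: L i i = 1 for all i; L i j = 0 unless j = i or j = i − 1 (L is unit lower bidiagonal); every diagonal entry of D is strictly positive; and C = L * D * Lᵀ. -/
set_option maxHeartbeats 1000000

open Matrix Finset

private lemma aux_sum {N : ℕ} (i : Fin N) (f : Fin N → ℝ)
    (hf : ∀ k : Fin N, (k : ℕ) ≠ (i : ℕ) → (k : ℕ) + 1 ≠ (i : ℕ) → f k = 0) :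
    ∑ k, f k = f i + (if h : (i : ℕ) = 0 then 0
      else f ⟨(i : ℕ) - 1, Nat.lt_of_le_of_lt (Nat.sub_le _ _) i.isLt⟩) := by
  by_cases h0 : (i : ℕ) = 0
  · rw [dif_pos h0, add_zero]
    exact Finset.sum_eq_single i (fun k _ hk => hf k (fun h => hk (Fin.ext h)) (by omega))
      (by simp)
  · rw [dif_neg h0]
    set i' : Fin N := ⟨(i : ℕ) - 1, Nat.lt_of_le_of_lt (Nat.sub_le _ _) i.isLt⟩ with hi'
    have hne : i ≠ i' := by
      intro h
      have := congrArg Fin.val h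
      simp only [hi'] at this
      omega
    have hsum : ∑ k, f k = ∑ k ∈ ({i, i'} : Finset (Fin N)), f k := by
      refine (Finset.sum_subset (Finset.subset_univ _) ?_).symm
      intro k _ hk
      simp only [Finset.mem_insert, Finset.mem_singleton] at hk
      push_neg at hk
      refine hf k (fun h => hk.1 (Fin.ext h)) fun hc => hk.2 (Fin.ext ?_)
      simp only [hi']
      omega
    rw [hsum, Finset.sum_pair hne]

/-- The symmetric positive-definite tridiagonal matrix `C` admits an `L D Lᵀ`
factorization with `L` unit lower bidiagonal and `D` diagonal with strictly
positive diagonal entries. -/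
theorem tridiagonal_LDLT_factorization
    (N : ℕ) (hN : 2 ≤ N) (ρ : ℕ → ℝ)
    (hρ : ∀ i j, i < j → j < N → ρ i < ρ j) (hρ0 : 0 < ρ 0)
    (C : Matrix (Fin N) (Fin N) ℝ)
    (hC : ∀ i j : Fin N, C i j =
      if i.val = j.val then
        (if i.val = 0 then 1 / ρ 0 + 1 / (ρ 1 - ρ 0)
         else if i.val = N - 1 then 1 / (ρ (N - 1) - ρ (N - 2))
         else 1 / (ρ i.val - ρ (i.val - 1)) + 1 / (ρ (i.val + 1) - ρ i.val))
      else if i.val + 1 = j.val ∨ j.val + 1 = i.val then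
        -(1 / (ρ (max i.val j.val) - ρ (min i.val j.val)))
      else 0) :
    ∃ L D : Matrix (Fin N) (Fin N) ℝ,
      (∀ i : Fin N, L i i = 1) ∧
      (∀ i j : Fin N, j ≠ i → (j : ℕ) + 1 ≠ (i : ℕ) → L i j = 0) ∧
      (∀ i j : Fin N, i ≠ j → D i j = 0) ∧
      (∀ i : Fin N, 0 < D i i) ∧
      C = L * D * Lᵀ := by
  have hpos : ∀ k, k < N → 0 < ρ k := by
    intro k hk
    rcases Nat.eq_zero_or_pos k with h | h
    · rw [h]; exact hρ0
    · exact lt_trans hρ0 (hρ 0 k h hk)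
  have hne : ∀ k, k < N → ρ k ≠ 0 := fun k hk => ne_of_gt (hpos k hk)
  have hdpos : ∀ a b, a < b → b < N → 0 < ρ b - ρ a := fun a b h1 h2 =>
    sub_pos.mpr (hρ a b h1 h2)
  have hdne : ∀ a b, a < b → b < N → ρ b - ρ a ≠ 0 := fun a b h1 h2 =>
    ne_of_gt (hdpos a b h1 h2)
  set d : Fin N → ℝ := fun i =>
    if (i : ℕ) = N - 1 then 1 / ρ (N - 1)
    else 1 / ρ (i : ℕ) + 1 / (ρ ((i : ℕ) + 1) - ρ (i : ℕ)) with hd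
  set L : Matrix (Fin N) (Fin N) ℝ := fun i j =>
    if (j : ℕ) = (i : ℕ) then 1
    else if (j : ℕ) + 1 = (i : ℕ) then -(ρ (j : ℕ) / ρ (i : ℕ)) else 0 with hL
  refine ⟨L, Matrix.diagonal d, ?_, ?_, ?_, ?_, ?_⟩
  · intro i; simp [hL]
  · intro i j h1 h2
    have h1' : (j : ℕ) ≠ (i : ℕ) := fun h => h1 (Fin.ext h)
    simp [hL, h1', h2]
  · intro i j h; exact Matrix.diagonal_apply_ne d h
  · intro i
    rw [Matrix.diagonal_apply_eq, hd]
    dsimp only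
    split_ifs with h
    · exact one_div_pos.mpr (hpos (N - 1) (by omega))
    · have h1 : (i : ℕ) + 1 < N := by have := i.isLt; omega
      have := hpos (i : ℕ) (i.isLt)
      have := hdpos (i : ℕ) ((i : ℕ) + 1) (by omega) h1
      positivity
  · ext i j
    have him : (i : ℕ) < N := i.isLt
    have hjm : (j : ℕ) < N := j.isLt
    rw [hC, Matrix.mul_assoc, Matrix.mul_apply]
    simp only [Matrix.diagonal_mul, Matrix.transpose_apply]
    rw [aux_sum i (fun k => L i k * (d k * L j k))
      (by intro k hk1 hk2; simp [hL, hk1, hk2])]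
    simp only [hL, hd]
    split_ifs <;>
      first
        | rfl
        | (exfalso; omega)
        | omega
        | skip
    all_goals clear hC hL hd L d C
    -- Goal 1: diagonal, i = 0
    · rw [show (i : ℕ) = 0 from by omega]
      norm_num
    -- Goal 2: diagonal, i = N - 1
    · have h1 := hne (N - 1) (by omega)
      have h2 := hne (N - 2) (by omega)
      have h3 := hdne (N - 2) (N - 1) (by omega) (by omega)
      rw [show (i : ℕ) - 1 + 1 = N - 1 from by omega,
        show (i : ℕ) - 1 = N - 2 from by omega,
        show (i : ℕ) = N - 1 from by omega,
        show (j : ℕ) = N - 1 from by omega]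
      field_simp
      ring
    -- Goal 3: diagonal, middle
    · have h1 := hne (i : ℕ) (by omega)
      have h2 := hne ((i : ℕ) - 1) (by omega)
      have h3 := hdne ((i : ℕ) - 1) (i : ℕ) (by omega) (by omega)
      have h4 := hdne (i : ℕ) ((i : ℕ) + 1) (by omega) (by omega)
      rw [show (i : ℕ) - 1 + 1 = (i : ℕ) from by omega,
        show (j : ℕ) = (i : ℕ) from by omega]
      field_simp
      ring
    -- Goal 4: off-diagonal, j + 1 = i = N - 1
    · have h1 := hne (N - 1) (by omega)
      have h2 := hne (N - 2) (by omega)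
      have h3 := hdne (N - 2) (N - 1) (by omega) (by omega)
      rw [show max (i : ℕ) (j : ℕ) = N - 1 from by omega,
        show min (i : ℕ) (j : ℕ) = N - 2 from by omega,
        show (i : ℕ) - 1 + 1 = N - 1 from by omega,
        show (i : ℕ) - 1 = N - 2 from by omega,
        show (i : ℕ) = N - 1 from by omega]
      field_simp
      ring
    -- Goal 5: off-diagonal, i + 1 = j, i = 0
    · have h1 := hne (i : ℕ) (by omega)
      have h2 := hne ((i : ℕ) + 1) (by omega)
      have h3 := hdne (i : ℕ) ((i : ℕ) + 1) (by omega) (by omega)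
      rw [show max (i : ℕ) (j : ℕ) = (i : ℕ) + 1 from by omega,
        show min (i : ℕ) (j : ℕ) = (i : ℕ) from by omega,
        show (j : ℕ) = (i : ℕ) + 1 from by omega]
      field_simp
      ring
    -- Goal 6: off-diagonal, i + 1 = j, 0 < i
    · have h1 := hne (i : ℕ) (by omega)
      have h2 := hne ((i : ℕ) + 1) (by omega)
      have h3 := hdne (i : ℕ) ((i : ℕ) + 1) (by omega) (by omega)
      have h4 := hne ((i : ℕ) - 1) (by omega)
      have h5 := hdne ((i : ℕ) - 1) (i : ℕ) (by omega) (by omega)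
      rw [show max (i : ℕ) (j : ℕ) = (i : ℕ) + 1 from by omega,
        show min (i : ℕ) (j : ℕ) = (i : ℕ) from by omega,
        show (j : ℕ) = (i : ℕ) + 1 from by omega,
        show (i : ℕ) - 1 + 1 = (i : ℕ) from by omega]
      field_simp
      ring
    -- Goal 7: off-diagonal, j + 1 = i, i < N - 1
    · have h1 := hne (i : ℕ) (by omega)
      have h2 := hne ((i : ℕ) - 1) (by omega)
      have h3 := hdne ((i : ℕ) - 1) (i : ℕ) (by omega) (by omega)
      have h4 := hdne (i : ℕ) ((i : ℕ) + 1) (by omega) (by omega)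
      rw [show max (i : ℕ) (j : ℕ) = (i : ℕ) from by omega,
        show min (i : ℕ) (j : ℕ) = (i : ℕ) - 1 from by omega,
        show (i : ℕ) - 1 + 1 = (i : ℕ) from by omega]
      field_simp
      ring
    -- Goals 8-10: zero entries
    · ring
    · ring
    · ring
end

section
/- (Continuity of the tide-model form in the weighted norm.) For all u, v ∈ V and η, w ∈ W, â((u,η),(v,w)) ≤ C · ‖(u,η)‖_b̂ · ‖(v,w)‖_b̂, where C = max { 2, 1 + k/ε + k·B⋆/C_M² }. -/
open scoped RealInnerProductSpace

private lemma cs2 (x1 x2 y1 y2 : ℝ) :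
    x1 * y1 + x2 * y2 ≤ Real.sqrt (x1 ^ 2 + x2 ^ 2) * Real.sqrt (y1 ^ 2 + y2 ^ 2) := by
  calc x1 * y1 + x2 * y2 ≤ |x1 * y1 + x2 * y2| := le_abs_self _
    _ = Real.sqrt ((x1 * y1 + x2 * y2) ^ 2) := (Real.sqrt_sq_eq_abs _).symm
    _ ≤ Real.sqrt ((x1 ^ 2 + x2 ^ 2) * (y1 ^ 2 + y2 ^ 2)) :=
        Real.sqrt_le_sqrt (by nlinarith [sq_nonneg (x1 * y2 - x2 * y1)])
    _ = _ := Real.sqrt_mul (by positivity) _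

private lemma bilin_cs {V : Type*} [AddCommGroup V] [Module ℝ V]
    (a : V →ₗ[ℝ] V →ₗ[ℝ] ℝ) (hsymm : ∀ u v, a u v = a v u)
    (hnn : ∀ u, 0 ≤ a u u) (u v : V) :
    a u v ≤ Real.sqrt (a u u) * Real.sqrt (a v v) := by
  have key : (a u v) ^ 2 ≤ a u u * a v v := by
    have hd : discrim (a v v) (2 * a u v) (a u u) ≤ 0 := by
      apply discrim_le_zero
      intro t
      have h0 := hnn (u + t • v)
      have expand : a (u + t • v) (u + t • v)
          = a v v * t ^ 2 + 2 * a u v * t + a u u := by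
        simp [map_add, map_smul, hsymm v u]
        ring
      linarith [expand ▸ h0]
    rw [discrim] at hd
    nlinarith
  calc a u v ≤ |a u v| := le_abs_self _
    _ = Real.sqrt ((a u v) ^ 2) := (Real.sqrt_sq_eq_abs _).symm
    _ ≤ Real.sqrt (a u u * a v v) := Real.sqrt_le_sqrt key
    _ = _ := Real.sqrt_mul (hnn u) _

private lemma combine (c a1 a2 a3 b1 b2 b3 : ℝ)
    (ha1 : 0 ≤ a1) (ha2 : 0 ≤ a2) (ha3 : 0 ≤ a3)
    (hb1 : 0 ≤ b1) (hb2 : 0 ≤ b2) (hb3 : 0 ≤ b3) :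
    c * (a1 * b1) + (a3 * b2 + a3 * b3 + a2 * b3)
      ≤ max 2 c * (Real.sqrt (a1 ^ 2 + a2 ^ 2 + a3 ^ 2)
          * Real.sqrt (b1 ^ 2 + b2 ^ 2 + b3 ^ 2)) := by
  set S := Real.sqrt (a2 ^ 2 + a3 ^ 2) with hS
  set T := Real.sqrt (b2 ^ 2 + b3 ^ 2) with hT
  have hSnn : 0 ≤ S := Real.sqrt_nonneg _
  have hTnn : 0 ≤ T := Real.sqrt_nonneg _
  have hmaxnn : (0 : ℝ) ≤ max 2 c := le_trans (by norm_num) (le_max_left 2 c)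
  have hST1 : a3 * b2 + a2 * b3 ≤ S * T := by
    have h := cs2 a3 a2 b2 b3
    rwa [show a3 ^ 2 + a2 ^ 2 = a2 ^ 2 + a3 ^ 2 by ring] at h
  have ha3S : a3 ≤ S := by
    rw [hS]
    exact (Real.le_sqrt ha3 (by positivity)).mpr (by nlinarith [sq_nonneg a2])
  have hb3T : b3 ≤ T := by
    rw [hT]
    exact (Real.le_sqrt hb3 (by positivity)).mpr (by nlinarith [sq_nonneg b2])
  have hST2 : a3 * b3 ≤ S * T := mul_le_mul ha3S hb3T hb3 hSnn
  have hmain : a1 * b1 + S * T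
      ≤ Real.sqrt (a1 ^ 2 + a2 ^ 2 + a3 ^ 2) * Real.sqrt (b1 ^ 2 + b2 ^ 2 + b3 ^ 2) := by
    have h := cs2 a1 S b1 T
    rwa [hS, hT, Real.sq_sqrt (by positivity), Real.sq_sqrt (by positivity),
      ← add_assoc, ← add_assoc] at h
  have e1 : c * (a1 * b1) ≤ max 2 c * (a1 * b1) :=
    mul_le_mul_of_nonneg_right (le_max_right 2 c) (mul_nonneg ha1 hb1)
  have e2 : 2 * (S * T) ≤ max 2 c * (S * T) :=
    mul_le_mul_of_nonneg_right (le_max_left 2 c) (mul_nonneg hSnn hTnn)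
  have e4 := mul_le_mul_of_nonneg_left hmain hmaxnn
  nlinarith

/-- Continuity of the tide-model bilinear form `â` with respect to the
weighted norm `‖·‖_b̂`, with constant `max {2, 1 + k/ε + k B⋆ / C_M²}`. -/
theorem tide_form_continuity
    {V W : Type*} [NormedAddCommGroup V] [InnerProductSpace ℝ V]
    [NormedAddCommGroup W] [InnerProductSpace ℝ W]
    (m : V →ₗ[ℝ] V →ₗ[ℝ] ℝ)
    (hm_symm : ∀ u v : V, m u v = m v u)
    (hm_pos : ∀ u : V, u ≠ 0 → 0 < m u u)
    (CM : ℝ) (hCM : 0 < CM)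
    (hm_lower : ∀ u : V, CM * ‖u‖ ≤ Real.sqrt (m u u))
    (aW : W →ₗ[ℝ] W →ₗ[ℝ] ℝ)
    (haW_symm : ∀ w w' : W, aW w w' = aW w' w)
    (haW_nonneg : ∀ w : W, 0 ≤ aW w w)
    (D : V →ₗ[ℝ] W) (B : V →ₗ[ℝ] V) (J : V →ₗ[ℝ] V)
    (hJ : ∀ u v : V, m (J u) (J v) = m u v)
    (Bstar : ℝ) (hBstar : 0 ≤ Bstar)
    (hB : ∀ u : V, ‖B u‖ ≤ Bstar * ‖u‖)
    (k ε Fr : ℝ) (hk : 0 < k) (hε : 0 < ε) (hFr : 0 < Fr) :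
    ∀ (u v : V) (η w : W),
      m u v + (k / ε) * m (J u) v + k * ⟪B u, v⟫ - Fr ^ 2 * k * aW η (D v)
          + Fr ^ 2 * aW η w + Fr ^ 2 * k * aW (D u) w
        ≤ max 2 (1 + k / ε + k * Bstar / CM ^ 2) *
            Real.sqrt (m u u + Fr ^ 2 * k ^ 2 * aW (D u) (D u) + Fr ^ 2 * aW η η) *
            Real.sqrt (m v v + Fr ^ 2 * k ^ 2 * aW (D v) (D v) + Fr ^ 2 * aW w w) := by
  intro u v η w
  have hm_nn : ∀ x : V, 0 ≤ m x x := by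
    intro x
    rcases eq_or_ne x 0 with rfl | hx
    · simp
    · exact (hm_pos x hx).le
  set a1 := Real.sqrt (m u u) with ha1def
  set a2 := Fr * k * Real.sqrt (aW (D u) (D u)) with ha2def
  set a3 := Fr * Real.sqrt (aW η η) with ha3def
  set b1 := Real.sqrt (m v v) with hb1def
  set b2 := Fr * k * Real.sqrt (aW (D v) (D v)) with hb2def
  set b3 := Fr * Real.sqrt (aW w w) with hb3def
  have ha1 : 0 ≤ a1 := Real.sqrt_nonneg _
  have ha2 : 0 ≤ a2 := by positivity
  have ha3 : 0 ≤ a3 := by positivity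
  have hb1 : 0 ≤ b1 := Real.sqrt_nonneg _
  have hb2 : 0 ≤ b2 := by positivity
  have hb3 : 0 ≤ b3 := by positivity
  have e1 : m u u + Fr ^ 2 * k ^ 2 * aW (D u) (D u) + Fr ^ 2 * aW η η
      = a1 ^ 2 + a2 ^ 2 + a3 ^ 2 := by
    rw [ha1def, ha2def, ha3def, mul_pow, mul_pow, mul_pow,
      Real.sq_sqrt (hm_nn u), Real.sq_sqrt (haW_nonneg _), Real.sq_sqrt (haW_nonneg _)]
  have e2 : m v v + Fr ^ 2 * k ^ 2 * aW (D v) (D v) + Fr ^ 2 * aW w w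
      = b1 ^ 2 + b2 ^ 2 + b3 ^ 2 := by
    rw [hb1def, hb2def, hb3def, mul_pow, mul_pow, mul_pow,
      Real.sq_sqrt (hm_nn v), Real.sq_sqrt (haW_nonneg _), Real.sq_sqrt (haW_nonneg _)]
  rw [e1, e2, mul_assoc]
  -- individual Cauchy–Schwarz type bounds
  have h1 : m u v ≤ a1 * b1 := bilin_cs m hm_symm hm_nn u v
  have h2 : m (J u) v ≤ a1 * b1 := by
    have h := bilin_cs m hm_symm hm_nn (J u) v
    rwa [hJ u u] at h
  have hnu : ‖u‖ ≤ a1 / CM := by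
    rw [le_div_iff₀ hCM]
    have := hm_lower u; linarith [hm_lower u]
  have hnv : ‖v‖ ≤ b1 / CM := by
    rw [le_div_iff₀ hCM]; linarith [hm_lower v]
  have h3 : ⟪B u, v⟫ ≤ Bstar / CM ^ 2 * (a1 * b1) := by
    have hi : ⟪B u, v⟫ ≤ ‖B u‖ * ‖v‖ := real_inner_le_norm _ _
    have hb : ‖B u‖ * ‖v‖ ≤ (Bstar * ‖u‖) * ‖v‖ :=
      mul_le_mul_of_nonneg_right (hB u) (norm_nonneg _)
    have hu' : Bstar * ‖u‖ ≤ Bstar * (a1 / CM) :=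
      mul_le_mul_of_nonneg_left hnu hBstar
    have hbu : 0 ≤ Bstar * ‖u‖ := mul_nonneg hBstar (norm_nonneg _)
    have h4 : (Bstar * ‖u‖) * ‖v‖ ≤ (Bstar * (a1 / CM)) * (b1 / CM) :=
      mul_le_mul hu' hnv (norm_nonneg _) (by positivity)
    have : (Bstar * (a1 / CM)) * (b1 / CM) = Bstar / CM ^ 2 * (a1 * b1) := by
      field_simp
    linarith [hi, hb, h4, this ▸ le_refl ((Bstar * (a1 / CM)) * (b1 / CM))]
  have h4 : -aW η (D v) ≤ Real.sqrt (aW η η) * Real.sqrt (aW (D v) (D v)) := by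
    have h := bilin_cs aW haW_symm haW_nonneg (-η) (D v)
    simpa using h
  have h5 : aW η w ≤ Real.sqrt (aW η η) * Real.sqrt (aW w w) :=
    bilin_cs aW haW_symm haW_nonneg η w
  have h6 : aW (D u) w ≤ Real.sqrt (aW (D u) (D u)) * Real.sqrt (aW w w) :=
    bilin_cs aW haW_symm haW_nonneg (D u) w
  -- assemble
  have key := combine (1 + k / ε + k * Bstar / CM ^ 2) a1 a2 a3 b1 b2 b3
    ha1 ha2 ha3 hb1 hb2 hb3
  have hkε : 0 < k / ε := div_pos hk hε
  have hFr2 : 0 < Fr ^ 2 := by positivity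
  have t2 : (k / ε) * m (J u) v ≤ (k / ε) * (a1 * b1) :=
    mul_le_mul_of_nonneg_left h2 hkε.le
  have t3 : k * ⟪B u, v⟫ ≤ k * (Bstar / CM ^ 2 * (a1 * b1)) :=
    mul_le_mul_of_nonneg_left h3 hk.le
  have t4 : -(Fr ^ 2 * k * aW η (D v))
      ≤ Fr ^ 2 * k * (Real.sqrt (aW η η) * Real.sqrt (aW (D v) (D v))) := by
    have := mul_le_mul_of_nonneg_left h4 (by positivity : (0:ℝ) ≤ Fr ^ 2 * k)
    linarith
  have t5 : Fr ^ 2 * aW η w ≤ Fr ^ 2 * (Real.sqrt (aW η η) * Real.sqrt (aW w w)) :=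
    mul_le_mul_of_nonneg_left h5 hFr2.le
  have t6 : Fr ^ 2 * k * aW (D u) w
      ≤ Fr ^ 2 * k * (Real.sqrt (aW (D u) (D u)) * Real.sqrt (aW w w)) :=
    mul_le_mul_of_nonneg_left h6 (by positivity)
  have sum_eq : (1 + k / ε + k * Bstar / CM ^ 2) * (a1 * b1)
        + (a3 * b2 + a3 * b3 + a2 * b3)
      = a1 * b1 + (k / ε) * (a1 * b1) + k * (Bstar / CM ^ 2 * (a1 * b1))
        + Fr ^ 2 * k * (Real.sqrt (aW η η) * Real.sqrt (aW (D v) (D v)))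
        + Fr ^ 2 * (Real.sqrt (aW η η) * Real.sqrt (aW w w))
        + Fr ^ 2 * k * (Real.sqrt (aW (D u) (D u)) * Real.sqrt (aW w w)) := by
    rw [ha2def, ha3def, hb2def, hb3def]; ring
  linarith [key, h1, t2, t3, t4, t5, t6, sum_eq ▸ key]
end

section
/- (Inf-sup stability of the tide-model form.) For all u ∈ V and η ∈ W, taking v = u and w = η + k·D u one has â((u,η),(v,w)) ≥ (1/(2·√3)) · ‖(u,η)‖_b̂ · ‖(v,w)‖_b̂; in particular the bilinear form â is inf-sup stable with respect to the ‖·‖_b̂ norm with constant at least 1/(2√3). -/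
open scoped RealInnerProductSpace

/-- Inf-sup stability of the tide-model form: with the test functions `v = u`
and `w = η + k • D u` one has
`â((u,η),(v,w)) ≥ (1/(2√3)) ‖(u,η)‖_b̂ ‖(v,w)‖_b̂`, so `â` is inf-sup stable
with respect to the `‖·‖_b̂` norm with constant at least `1/(2√3)`. -/
theorem tide_form_inf_sup
    {V W : Type*} [NormedAddCommGroup V] [InnerProductSpace ℝ V]
    [NormedAddCommGroup W] [InnerProductSpace ℝ W]
    (m : V →ₗ[ℝ] V →ₗ[ℝ] ℝ)
    (hm_symm : ∀ u v : V, m u v = m v u)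
    (hm_pos : ∀ u : V, u ≠ 0 → 0 < m u u)
    (aW : W →ₗ[ℝ] W →ₗ[ℝ] ℝ)
    (haW_symm : ∀ w w' : W, aW w w' = aW w' w)
    (haW_nonneg : ∀ w : W, 0 ≤ aW w w)
    (D : V →ₗ[ℝ] W) (B : V →ₗ[ℝ] V) (J : V →ₗ[ℝ] V)
    (hJ : ∀ u : V, m (J u) u = 0)
    (hB : ∀ u : V, 0 ≤ ⟪B u, u⟫)
    (k ε Fr : ℝ) (hk : 0 < k) (hε : 0 < ε) (hFr : 0 < Fr) :
    ∀ (u : V) (η : W),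
      m u u + (k / ε) * m (J u) u + k * ⟪B u, u⟫
          - Fr ^ 2 * k * aW η (D u)
          + Fr ^ 2 * aW η (η + k • D u)
          + Fr ^ 2 * k * aW (D u) (η + k • D u)
        ≥ (1 / (2 * Real.sqrt 3)) *
            Real.sqrt (m u u + Fr ^ 2 * k ^ 2 * aW (D u) (D u) + Fr ^ 2 * aW η η) *
            Real.sqrt (m u u + Fr ^ 2 * k ^ 2 * aW (D u) (D u)
              + Fr ^ 2 * aW (η + k • D u) (η + k • D u)) := by
  intro u η
  have hs : 0 ≤ m u u := by
    rcases eq_or_ne u 0 with h | h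
    · simp [h]
    · exact le_of_lt (hm_pos u h)
  have hB' : 0 ≤ k * ⟪B u, u⟫ := mul_nonneg hk.le (hB u)
  have hsymm : aW (D u) η = aW η (D u) := haW_symm _ _
  have hd0 : (0:ℝ) ≤ aW (D u) (D u) := haW_nonneg _
  have he0 : (0:ℝ) ≤ aW η η := haW_nonneg _
  have h1 : 0 ≤ aW η η + 2 * k * aW η (D u) + k ^ 2 * aW (D u) (D u) := by
    have h := haW_nonneg (η + k • D u)
    simp only [map_add, map_smul, LinearMap.add_apply, LinearMap.smul_apply,
      smul_eq_mul] at h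
    nlinarith [h, hsymm]
  have h2 : 0 ≤ aW η η - 2 * k * aW η (D u) + k ^ 2 * aW (D u) (D u) := by
    have h := haW_nonneg (η - k • D u)
    simp only [map_sub, map_smul, LinearMap.sub_apply, LinearMap.smul_apply,
      smul_eq_mul] at h
    nlinarith [h, hsymm]
  set X : ℝ := m u u + Fr ^ 2 * k ^ 2 * aW (D u) (D u) + Fr ^ 2 * aW η η with hXdef
  set Y : ℝ := m u u + Fr ^ 2 * k ^ 2 * aW (D u) (D u)
      + Fr ^ 2 * aW (η + k • D u) (η + k • D u) with hYdef
  have hFr2 : (0:ℝ) ≤ Fr ^ 2 := sq_nonneg Fr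
  have hX : 0 ≤ X := by
    have := mul_nonneg hFr2 hd0
    have := mul_nonneg hFr2 he0
    nlinarith
  have hYexp : Y = X + Fr ^ 2 * k ^ 2 * aW (D u) (D u)
      + 2 * Fr ^ 2 * k * aW η (D u) := by
    simp only [hYdef, hXdef, map_add, map_smul, LinearMap.add_apply,
      LinearMap.smul_apply, smul_eq_mul]
    rw [hsymm]; ring
  have hY3 : Y ≤ 3 * X := by
    have := mul_nonneg hFr2 h2
    nlinarith [mul_nonneg hFr2 hd0, mul_nonneg hFr2 he0]
  have hsqY : Real.sqrt Y ≤ Real.sqrt 3 * Real.sqrt X := by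
    rw [← Real.sqrt_mul (by norm_num : (0:ℝ) ≤ 3)]
    exact Real.sqrt_le_sqrt hY3
  have h3pos : 0 < Real.sqrt 3 := Real.sqrt_pos.mpr (by norm_num)
  have hsX : Real.sqrt X * Real.sqrt X = X := Real.mul_self_sqrt hX
  have hRHS : (1 / (2 * Real.sqrt 3)) * Real.sqrt X * Real.sqrt Y ≤ X / 2 := by
    have hstep : (1 / (2 * Real.sqrt 3)) * Real.sqrt X * Real.sqrt Y
        ≤ (1 / (2 * Real.sqrt 3)) * Real.sqrt X * (Real.sqrt 3 * Real.sqrt X) := by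
      apply mul_le_mul_of_nonneg_left hsqY (by positivity)
    have heq : (1 / (2 * Real.sqrt 3)) * Real.sqrt X * (Real.sqrt 3 * Real.sqrt X)
        = X / 2 := by
      rw [show (1 / (2 * Real.sqrt 3)) * Real.sqrt X * (Real.sqrt 3 * Real.sqrt X)
          = (Real.sqrt 3 / (2 * Real.sqrt 3)) * (Real.sqrt X * Real.sqrt X) from by
        ring]
      rw [hsX, div_eq_iff (by positivity : (2 * Real.sqrt 3) ≠ 0) |>.mpr (by ring :
        Real.sqrt 3 = (1/2 : ℝ) * (2 * Real.sqrt 3))]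
      ring
    linarith [hstep, heq ▸ hstep]
  have hLHS : m u u + (k / ε) * m (J u) u + k * ⟪B u, u⟫
      - Fr ^ 2 * k * aW η (D u)
      + Fr ^ 2 * aW η (η + k • D u)
      + Fr ^ 2 * k * aW (D u) (η + k • D u) ≥ X / 2 := by
    simp only [map_add, map_smul, LinearMap.add_apply, LinearMap.smul_apply,
      smul_eq_mul, hJ u, mul_zero]
    rw [hsymm, hXdef]
    have := mul_nonneg hFr2 h1
    nlinarith [this, hs, hB']
  linarith [hRHS, hLHS]
end
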